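/- Let R be an m×p real matrix, s, β̂ ∈ ℝ^p, λ ≥ 0, and let D be a p×p diagonal matrix with positive diagonal entries. Suppose μ* maximizes the dual objective μ ↦ −½ μᵀ R D⁻¹ Rᵀ μ + ⟨μ, R(β̂ − D⁻¹s)⟩ over the box {μ ∈ ℝ^m : ‖μ‖_∞ ≤ λ}. Then β* = β̂ − D⁻¹(s + Rᵀμ*) minimizes the primal h-subproblem objective β ↦ ⟨s, β⟩ + λ‖Rβ‖₁ + ½‖β − β̂‖²_D over ℝ^p. In particular, even if the dual maximizer μ* is not unique (e.g., when R is singular), the recovered β* is an optimal solution of the h-subproblem. -/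

import Mathlib

/-!
The gradient of the dual objective at `μ*` is `R(β̂ − D⁻¹s) − RD⁻¹Rᵀμ* = Rβ*`, so first-order
optimality of `μ*` on the convex box says `⟨ν − μ*, Rβ*⟩ ≤ 0` for every `ν` in the box. Testing it
with `ν = λ · sign(Rβ*)` gives complementarity `λ‖Rβ*‖₁ ≤ ⟨μ*, Rβ*⟩`. For any `β`, Hölder's
inequality bounds the primal objective below by the Lagrangian
`L(β) = ⟨s + Rᵀμ*, β⟩ + ½‖β − β̂‖²_D`, a separable quadratic minimized exactly at `β*`;
complementarity says the primal objective and `L` agree at `β*`.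
-/

open Matrix

theorem nonpos_of_forall_mul_le_sq_mul {a c : ℝ}
    (h : ∀ t : ℝ, 0 < t → t ≤ 1 → t * a ≤ t ^ 2 * c) : a ≤ 0 := by
  refine le_of_forall_pos_le_add fun ε hε => ?_
  set t := min 1 (ε / (|c| + 1))
  have ht : 0 < t := lt_min one_pos (by positivity)
  have hta : a ≤ t * c := by
    have := h t ht (min_le_left _ _)
    rw [pow_two, mul_assoc] at this
    exact le_of_mul_le_mul_left this ht
  have htε : t * (|c| + 1) ≤ ε :=
    (le_div_iff₀ (by positivity)).mp (min_le_right _ _)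
  nlinarith [le_abs_self c, abs_nonneg c]

section FirstOrderOptimality

variable {n : Type*} [Fintype n]

theorem concaveQuadratic_add_smul {M : Matrix n n ℝ} (hM : M.IsSymm) (b x v : n → ℝ) (t : ℝ) :
    -(1 / 2) * ((x + t • v) ⬝ᵥ M *ᵥ (x + t • v)) + (x + t • v) ⬝ᵥ b
      = -(1 / 2) * (x ⬝ᵥ M *ᵥ x) + x ⬝ᵥ b + t * (v ⬝ᵥ (b - M *ᵥ x))
        - t ^ 2 / 2 * (v ⬝ᵥ M *ᵥ v) := by
  have hsymm : x ⬝ᵥ M *ᵥ v = v ⬝ᵥ M *ᵥ x := by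
    rw [dotProduct_mulVec, ← mulVec_transpose, hM.eq, dotProduct_comm]
  simp only [mulVec_add, mulVec_smul, add_dotProduct, dotProduct_add, smul_dotProduct,
    dotProduct_smul, dotProduct_sub, smul_eq_mul, hsymm]
  ring

theorem dotProduct_sub_mulVec_nonpos_of_isMaxOn {M : Matrix n n ℝ} (hM : M.IsSymm) {b x : n → ℝ}
    {K : Set (n → ℝ)} (hK : Convex ℝ K) (hx : x ∈ K)
    (hmax : IsMaxOn (fun y => -(1 / 2) * (y ⬝ᵥ M *ᵥ y) + y ⬝ᵥ b) K x) {y : n → ℝ} (hy : y ∈ K) :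
    (y - x) ⬝ᵥ (b - M *ᵥ x) ≤ 0 := by
  refine nonpos_of_forall_mul_le_sq_mul (c := (y - x) ⬝ᵥ M *ᵥ (y - x) / 2) fun t ht0 ht1 => ?_
  have := isMaxOn_iff.mp hmax _ (hK.add_smul_sub_mem hx hy ⟨ht0.le, ht1⟩)
  rw [concaveQuadratic_add_smul hM] at this
  linarith

end FirstOrderOptimality

section Box

variable {n : Type*}

theorem convex_setOf_forall_abs_le (lam : ℝ) : Convex ℝ {μ : n → ℝ | ∀ i, |μ i| ≤ lam} := by
  have : {μ : n → ℝ | ∀ i, |μ i| ≤ lam} = Set.univ.pi fun _ => Set.Icc (-lam) lam := by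
    ext μ
    simp only [Set.mem_ofPred_eq, Set.mem_univ_pi, Set.mem_Icc, abs_le]
  rw [this]
  exact convex_pi fun _ _ => convex_Icc _ _

variable [Fintype n]

theorem dotProduct_le_mul_sum_abs {lam : ℝ} {μ : n → ℝ} (hμ : ∀ i, |μ i| ≤ lam) (g : n → ℝ) :
    μ ⬝ᵥ g ≤ lam * ∑ i, |g i| := by
  rw [Finset.mul_sum]
  refine Finset.sum_le_sum fun i _ => ?_
  calc μ i * g i ≤ |μ i| * |g i| := by rw [← abs_mul]; exact le_abs_self _
    _ ≤ lam * |g i| := mul_le_mul_of_nonneg_right (hμ i) (abs_nonneg _)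

theorem mul_sum_abs_le_dotProduct {lam : ℝ} (hlam : 0 ≤ lam) {μ g : n → ℝ}
    (hvi : ∀ ν : n → ℝ, (∀ i, |ν i| ≤ lam) → (ν - μ) ⬝ᵥ g ≤ 0) :
    lam * ∑ i, |g i| ≤ μ ⬝ᵥ g := by
  set ν : n → ℝ := fun i => if 0 ≤ g i then lam else -lam
  have hν : ∀ i, |ν i| ≤ lam := fun i => by
    by_cases h : 0 ≤ g i <;> simp [ν, h, abs_of_nonneg hlam]
  have hνg : ν ⬝ᵥ g = lam * ∑ i, |g i| := by
    rw [dotProduct, Finset.mul_sum]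
    refine Finset.sum_congr rfl fun i _ => ?_
    by_cases h : 0 ≤ g i
    · simp [ν, h, abs_of_nonneg h]
    · simp [ν, h, abs_of_neg (not_le.mp h)]
  have := hvi ν hν
  rw [sub_dotProduct, hνg] at this
  linarith

end Box

section Primal

variable {m p : Type*} [Fintype m] [Fintype p]

noncomputable def hSubproblemObjective (R : Matrix m p ℝ) (s βhat d : p → ℝ) (lam : ℝ)
    (β : p → ℝ) : ℝ :=
  (∑ j, s j * β j) + lam * (∑ i, |R.mulVec β i|) + (1 / 2) * ∑ j, d j * (β j - βhat j) ^ 2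

theorem mul_add_half_mul_sq_le {a c d x y : ℝ} (hd : 0 ≤ d) (ha : a = d * (c - y)) :
    a * y + 1 / 2 * (d * (y - c) ^ 2) ≤ a * x + 1 / 2 * (d * (x - c) ^ 2) := by
  subst ha
  nlinarith [mul_nonneg hd (sq_nonneg (x - y))]

theorem hSubproblemObjective_le_of_complementary {R : Matrix m p ℝ} {s βhat d : p → ℝ}
    (hd : ∀ j, 0 ≤ d j) {lam : ℝ} {μ : m → ℝ} (hμ : ∀ i, |μ i| ≤ lam) {βstar : p → ℝ}
    (hstat : ∀ j, s j + (Rᵀ *ᵥ μ) j = d j * (βhat j - βstar j))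
    (hcomp : lam * ∑ i, |(R *ᵥ βstar) i| ≤ μ ⬝ᵥ R *ᵥ βstar) (β : p → ℝ) :
    hSubproblemObjective R s βhat d lam βstar ≤ hSubproblemObjective R s βhat d lam β := by
  have hswap : ∀ x : p → ℝ, μ ⬝ᵥ R *ᵥ x = (Rᵀ *ᵥ μ) ⬝ᵥ x := fun x => by
    rw [dotProduct_mulVec, mulVec_transpose]
  have hlagr : ∑ j, ((s j + (Rᵀ *ᵥ μ) j) * βstar j + 1 / 2 * (d j * (βstar j - βhat j) ^ 2))
      ≤ ∑ j, ((s j + (Rᵀ *ᵥ μ) j) * β j + 1 / 2 * (d j * (β j - βhat j) ^ 2)) :=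
    Finset.sum_le_sum fun j _ => mul_add_half_mul_sq_le (hd j) (hstat j)
  have hholder := dotProduct_le_mul_sum_abs hμ (R *ᵥ β)
  rw [hswap] at hcomp hholder
  simp only [add_mul, Finset.sum_add_distrib, ← Finset.mul_sum] at hlagr
  unfold hSubproblemObjective
  simp only [dotProduct] at hcomp hholder
  linarith

end Primal

/-- if `μ*` maximizes the dual objective
`μ ↦ −½ μᵀRD⁻¹Rᵀμ + ⟨μ, R(β̂−D⁻¹s)⟩` over the box `{μ : ‖μ‖_∞ ≤ λ}`, then
`β* = β̂ − D⁻¹(s + Rᵀμ*)` minimizes the primal h-subproblem objective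
`β ↦ ⟨s,β⟩ + λ‖Rβ‖₁ + ½‖β−β̂‖²_D` over `ℝ^p`. -/
theorem stmt11 {m p : ℕ} (R : Matrix (Fin m) (Fin p) ℝ)
    (s βhat : Fin p → ℝ) (lam : ℝ) (hlam : 0 ≤ lam)
    (d : Fin p → ℝ) (hd : ∀ j, 0 < d j)
    (μstar : Fin m → ℝ) (hbox : ∀ i, |μstar i| ≤ lam)
    (hdualmax : ∀ μ : Fin m → ℝ, (∀ i, |μ i| ≤ lam) →
      -(1/2) * (∑ i, μ i
            * ((R * Matrix.diagonal (fun j => (d j)⁻¹) * R.transpose).mulVec μ) i)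
          + (∑ i, μ i * (R.mulVec (fun j => βhat j - s j / d j)) i)
        ≤ -(1/2) * (∑ i, μstar i
            * ((R * Matrix.diagonal (fun j => (d j)⁻¹) * R.transpose).mulVec μstar) i)
          + (∑ i, μstar i * (R.mulVec (fun j => βhat j - s j / d j)) i))
    (βstar : Fin p → ℝ)
    (hβstar : ∀ j, βstar j = βhat j - (s j + R.transpose.mulVec μstar j) / d j) :
    ∀ β : Fin p → ℝ,
      (∑ j, s j * βstar j) + lam * (∑ i, |R.mulVec βstar i|)
          + (1/2) * ∑ j, d j * (βstar j - βhat j)^2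
        ≤ (∑ j, s j * β j) + lam * (∑ i, |R.mulVec β i|)
          + (1/2) * ∑ j, d j * (β j - βhat j)^2 := by
  set M := R * diagonal (fun j => (d j)⁻¹) * Rᵀ
  have hM : M.IsSymm := by simp [IsSymm, M, transpose_mul, Matrix.mul_assoc]
  have hgrad : (R *ᵥ fun j => βhat j - s j / d j) - M *ᵥ μstar = R *ᵥ βstar := by
    rw [← mulVec_mulVec, ← mulVec_mulVec, ← mulVec_sub]
    congr 1
    funext j
    simp only [Pi.sub_apply, mulVec_diagonal, hβstar j]
    ring
  have hvi : ∀ ν : Fin m → ℝ, (∀ i, |ν i| ≤ lam) → (ν - μstar) ⬝ᵥ R *ᵥ βstar ≤ 0 :=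
    fun ν hν => hgrad ▸ dotProduct_sub_mulVec_nonpos_of_isMaxOn hM
      (convex_setOf_forall_abs_le lam) hbox (isMaxOn_iff.mpr hdualmax) hν
  have hstat : ∀ j, s j + (Rᵀ *ᵥ μstar) j = d j * (βhat j - βstar j) := fun j => by
    rw [hβstar j]
    field_simp [(hd j).ne']
    ring
  exact hSubproblemObjective_le_of_complementary (fun j => (hd j).le) hbox hstat
    (mul_sum_abs_le_dotProduct hlam hvi)
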